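/- arXiv:1701.06119 — 2 statements merged into one kernel-verified Lean document; each statement's English description precedes it below -/
import Mathlib

section
/- With d = |E| − |X|, there exist functions C, F_1, …, F_d : X × X → ℝ, K : ℝ^d × X → ℝ, and ψ : ℝ^d → ℝ such that, defining w_θ : X × X → ℝ by log w_θ(y|x) = C(x,y) + Σ_{i=1}^d θ^i F_i(x,y) + K_θ(y) − K_θ(x) − ψ(θ) for (x,y) ∈ E and w_θ(y|x) = 0 for (x,y) ∉ E, the map θ ↦ w_θ is a bijection from ℝ^d onto W(X,E); that is, W(X,E) is itself an exponential family of dimension |E| − |X|. -/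
open scoped BigOperators

/-- The directed graph `(X, E)` is strongly connected: any vertex can be reached
from any other by a path of length at least one along edges in `E`. -/
def StronglyConnected {X : Type*} (E : Finset (X × X)) : Prop :=
  ∀ x y : X, Relation.TransGen (fun a b => (a, b) ∈ E) x y

/-- `w` is a Markov kernel on `(X, E)` (an element of `W(X,E)`):
`w x y` denotes `w(y|x)`, is nonnegative, sums to one over `y`,
and is positive exactly on the edge set `E`. -/
def IsMarkovKernel {X : Type*} [Fintype X] (E : Finset (X × X)) (w : X → X → ℝ) : Prop :=
  (∀ x y, 0 ≤ w x y) ∧ (∀ x, ∑ y, w x y = 1) ∧ (∀ x y, (0 < w x y ↔ (x, y) ∈ E))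

/-!
Record a kernel `w ∈ W(X,E)` by `log w` on the edges, a vector in `ℝ^E`, and call
`K(y) - K(x) - c` a gauge term. Every `H ∈ ℝ^E` is, up to a gauge term, the log of a kernel:
normalize the Perron eigenvector `v` of the irreducible matrix `exp H` to
`w(y|x) = exp H(x,y) v(y) / (r v(x))`. Two kernels whose logs differ by a gauge term coincide,
since `exp K` is then a positive eigenfunction of a stochastic matrix, hence constant by the
maximum principle on a strongly connected graph. So `W(X,E)` is in bijection with `ℝ^E` modulo
gauge terms; on a strongly connected graph the gauge map `(K, c) ↦ K(y) - K(x) - c` has a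
one-dimensional kernel (the constants), so this quotient has dimension `|E| - |X|`, and linear
coordinates `θ` on it give the exponential family with `C = 0`.
-/

open Finset Filter Topology

namespace Matrix

theorem mulVec_apply_pos {m n : Type*} [Fintype n] {A : Matrix m n ℝ} {v : n → ℝ}
    (hA : ∀ i j, 0 ≤ A i j) (hv : 0 ≤ v) {i : m} {j : n} (hij : 0 < A i j) (hj : 0 < v j) :
    0 < (A *ᵥ v) i :=
  (mul_pos hij hj).trans_le <|
    single_le_sum (f := fun k => A i k * v k) (fun k _ => mul_nonneg (hA i k) (hv k)) (mem_univ j)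

theorem mulVec_nonneg {m n : Type*} [Fintype n] {A : Matrix m n ℝ} {v : n → ℝ}
    (hA : ∀ i j, 0 ≤ A i j) (hv : 0 ≤ v) : 0 ≤ A *ᵥ v :=
  fun i => sum_nonneg fun k _ => mul_nonneg (hA i k) (hv k)

variable {n : Type*} [Fintype n] {M : Matrix n n ℝ}

theorem pow_mulVec_eq_smul [DecidableEq n] {r : ℝ} {v : n → ℝ} (h : M *ᵥ v = r • v) (k : ℕ) :
    (M ^ k) *ᵥ v = r ^ k • v := by
  induction k with
  | zero => simp
  | succ k ih => rw [pow_succ', ← mulVec_mulVec, ih, mulVec_smul, h, smul_smul, pow_succ]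

theorem IsIrreducible.exists_pos_commute [DecidableEq n] (hM : M.IsIrreducible) :
    ∃ A : Matrix n n ℝ, (∀ i j, 0 < A i j) ∧ Commute M A := by
  choose k _ hk using (isIrreducible_iff_exists_pow_pos hM.nonneg).1 hM
  refine ⟨∑ p : n × n, M ^ k p.1 p.2, fun i j => ?_, .sum_right _ _ _ fun p _ => .self_pow M _⟩
  rw [sum_apply]
  exact (hk i j).trans_le <| single_le_sum (f := fun p : n × n => (M ^ k p.1 p.2) i j)
    (fun p _ => pow_apply_nonneg hM.nonneg _ _ _) (mem_univ (i, j))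

/-- The strict step of the Collatz–Wielandt argument: `u = A v` turns `r v ≤ M v` with
`r v ≠ M v` into a strict inequality in every coordinate, which leaves room to increase `r`. -/
theorem exists_lt_smul_le_mulVec {A : Matrix n n ℝ}
    (hA : ∀ i j, 0 < A i j) (hMA : Commute M A) {r : ℝ} {v : n → ℝ} (hv : 0 ≤ v)
    (hle : r • v ≤ M *ᵥ v) (hne : r • v ≠ M *ᵥ v) :
    ∃ r' > r, ∃ u : n → ℝ, (∀ i, 0 < u i) ∧ r' • u ≤ M *ᵥ u := by
  have hA0 : ∀ i j, 0 ≤ A i j := fun i j => (hA i j).le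
  obtain ⟨j, hj⟩ : ∃ j, 0 < v j := by
    by_contra! h
    exact hne (by rw [le_antisymm h hv, mulVec_zero, smul_zero])
  obtain ⟨j', hj'⟩ : ∃ j, 0 < (M *ᵥ v - r • v) j := by
    by_contra! h
    exact hne (le_antisymm hle (sub_nonpos.1 h))
  set u := A *ᵥ v
  have hMu : M *ᵥ u = r • u + A *ᵥ (M *ᵥ v - r • v) := by
    rw [mulVec_sub, mulVec_smul, mulVec_mulVec, hMA.eq, ← mulVec_mulVec]
    abel
  have hgap : ∀ i, 0 < (A *ᵥ (M *ᵥ v - r • v)) i := fun i =>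
    mulVec_apply_pos hA0 (sub_nonneg.2 hle) (hA i j') hj'
  have hsmall : ∀ᶠ ε in 𝓝 (0 : ℝ), ∀ i, ε * u i < (A *ᵥ (M *ᵥ v - r • v)) i :=
    eventually_all.2 fun i => (continuous_id.mul continuous_const).tendsto' 0 0 (zero_mul _)
      |>.eventually (gt_mem_nhds (hgap i))
  obtain ⟨ε, hεu, hε⟩ :=
    ((hsmall.filter_mono nhdsWithin_le_nhds).and (self_mem_nhdsWithin (s := Set.Ioi 0))).exists
  refine ⟨r + ε, lt_add_of_pos_right r hε, u, fun i => mulVec_apply_pos hA0 hv (hA i j) hj,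
    fun i => ?_⟩
  have hεi := hεu i
  simp only [Pi.smul_apply, smul_eq_mul, hMu, Pi.add_apply] at hεi ⊢
  linarith

/-- Collatz–Wielandt: maximize `r` over the compact set of pairs `(r, v)` with `v` in the
standard simplex and `r • v ≤ M *ᵥ v`; `exists_lt_smul_le_mulVec` forces equality at a maximum. -/
theorem exists_nonneg_eigenvector [Nonempty n] {A : Matrix n n ℝ} (hM : ∀ i j, 0 ≤ M i j)
    (hA : ∀ i j, 0 < A i j) (hMA : Commute M A) :
    ∃ r ≥ (0 : ℝ), ∃ v ∈ stdSimplex ℝ n, M *ᵥ v = r • v := by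
  classical
  set S : Set (ℝ × (n → ℝ)) := {p | 0 ≤ p.1 ∧ p.2 ∈ stdSimplex ℝ n ∧ p.1 • p.2 ≤ M *ᵥ p.2}
  have hS : IsCompact S := by
    refine (isCompact_Icc (a := 0) (b := ∑ i, ∑ j, M i j)).prod (isCompact_stdSimplex ℝ n)
      |>.of_isClosed_subset ?_ fun p ⟨hr, hv, hle⟩ => ⟨⟨hr, ?_⟩, hv⟩
    · exact (isClosed_le continuous_const continuous_fst).inter <|
        ((isClosed_stdSimplex ℝ n).preimage continuous_snd).inter <|
        isClosed_le (continuous_fst.smul continuous_snd)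
          (continuous_const.matrix_mulVec continuous_snd)
    · calc p.1 = ∑ i, p.1 * p.2 i := by rw [← mul_sum, hv.2, mul_one]
        _ ≤ ∑ i, (M *ᵥ p.2) i := sum_le_sum fun i _ => hle i
        _ ≤ ∑ i, ∑ j, M i j := sum_le_sum fun i _ => sum_le_sum fun j _ =>
          mul_le_of_le_one_right (hM i j) (mem_Icc_of_mem_stdSimplex hv j).2
  obtain ⟨i₀⟩ := ‹Nonempty n›
  have hS₀ : ((0 : ℝ), Pi.single i₀ (1 : ℝ)) ∈ S :=
    ⟨le_rfl, single_mem_stdSimplex ℝ i₀, by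
      rw [zero_smul]; exact mulVec_nonneg hM (single_mem_stdSimplex ℝ i₀).1⟩
  obtain ⟨⟨r, v⟩, ⟨hr, hv, hle⟩, hmax⟩ := hS.exists_isMaxOn ⟨_, hS₀⟩ continuous_fst.continuousOn
  refine ⟨r, hr, v, hv, (of_not_not fun hne => ?_ : r • v = M *ᵥ v).symm⟩
  obtain ⟨r', hr', u, hu, hle'⟩ := exists_lt_smul_le_mulVec hA hMA hv.1 hle hne
  have hsum : 0 < ∑ i, u i := sum_pos (fun i _ => hu i) univ_nonempty
  have hS' : (r', (∑ i, u i)⁻¹ • u) ∈ S := by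
    refine ⟨hr.trans hr'.le, ⟨fun i => ?_, ?_⟩, ?_⟩
    · exact smul_nonneg (inv_nonneg.2 hsum.le) (hu i).le
    · simp only [Pi.smul_apply, smul_eq_mul, ← mul_sum, inv_mul_cancel₀ hsum.ne']
    · rw [smul_comm, mulVec_smul]
      exact smul_le_smul_of_nonneg_left hle' (inv_nonneg.2 hsum.le)
  exact hr'.not_ge (hmax hS')

theorem IsIrreducible.exists_pos_eigenvector [DecidableEq n] [Nonempty n]
    (hM : M.IsIrreducible) : ∃ r > (0 : ℝ), ∃ v : n → ℝ, (∀ i, 0 < v i) ∧ M *ᵥ v = r • v := by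
  obtain ⟨A, hA, hMA⟩ := hM.exists_pos_commute
  obtain ⟨r, hr, v, hv, hMv⟩ := exists_nonneg_eigenvector hM.nonneg hA hMA
  obtain ⟨j, hj⟩ : ∃ j, 0 < v j := by
    by_contra! h
    have := sum_nonpos fun j (_ : j ∈ univ) => h j
    linarith [hv.2]
  have hpos : ∀ i, ∃ k ≠ 0, 0 < r ^ k * v i := fun i => by
    obtain ⟨k, hk, hkij⟩ := (isIrreducible_iff_exists_pow_pos hM.nonneg).1 hM i j
    have h := mulVec_apply_pos (pow_apply_nonneg hM.nonneg k) hv.1 hkij hj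
    rw [pow_mulVec_eq_smul hMv, Pi.smul_apply, smul_eq_mul] at h
    exact ⟨k, hk.ne', h⟩
  refine ⟨r, hr.lt_of_ne' fun hr0 => ?_, v, fun i => ?_, hMv⟩
  · obtain ⟨k, hk, h⟩ := hpos j
    simp [hr0, zero_pow hk] at h
  · obtain ⟨k, -, h⟩ := hpos i
    exact pos_of_mul_pos_right h (pow_nonneg hr k)

end Matrix

theorem StronglyConnected.isIrreducible {n : Type*} {E : Finset (n × n)} (hE : StronglyConnected E)
    {M : Matrix n n ℝ} (hM : ∀ i j, 0 ≤ M i j) (hME : ∀ i j, (i, j) ∈ E → 0 < M i j) :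
    M.IsIrreducible := by
  let := M.toQuiver
  refine ⟨hM, fun i j => ?_⟩
  induction hE i j with
  | single h => exact ⟨(PLift.up (hME _ _ h) : _ ⟶ _).toPath, by simp⟩
  | tail _ h ih =>
    obtain ⟨p, -⟩ := ih
    exact ⟨p.cons (PLift.up (hME _ _ h)), by simp⟩

theorem Relation.TransGen.exists_eq_add_mul {n : Type*} {E : Finset (n × n)} {x y : n}
    (h : Relation.TransGen (fun a b => (a, b) ∈ E) x y) {K : n → ℝ} {c : ℝ}
    (hK : ∀ x y, (x, y) ∈ E → K y = K x + c) : ∃ k : ℕ, 0 < k ∧ K y = K x + k * c := by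
  induction h with
  | single h => exact ⟨1, one_pos, by simp [hK _ _ h]⟩
  | tail _ h ih =>
    obtain ⟨k, -, hk⟩ := ih
    exact ⟨k + 1, k.succ_pos, by rw [hK _ _ h, hk]; push_cast; ring⟩

section MarkovKernel

variable {X : Type*} {E : Finset (X × X)} {u w : X → X → ℝ}

variable (E) in
noncomputable def edgeLog (w : X → X → ℝ) : E → ℝ := fun e => Real.log (w e.1.1 e.1.2)

variable (E) in
/-- Adding `gaugeMap E (K, c)` to `edgeLog E w` is the gauge transformation
`w x y ↦ w x y * exp (K y - K x - c)`. -/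
def gaugeMap : (X → ℝ) × ℝ →ₗ[ℝ] (E → ℝ) where
  toFun p e := p.1 e.1.2 - p.1 e.1.1 - p.2
  map_add' p q := by ext; simp only [Prod.fst_add, Prod.snd_add, Pi.add_apply]; ring
  map_smul' a p := by ext; simp only [Prod.smul_fst, Prod.smul_snd, Pi.smul_apply, smul_eq_mul,
    RingHom.id_apply]; ring

theorem gaugeMap_apply (p : (X → ℝ) × ℝ) (e : E) : gaugeMap E p e = p.1 e.1.2 - p.1 e.1.1 - p.2 :=
  rfl

theorem ker_gaugeMap [Nonempty X] (hE : StronglyConnected E) :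
    LinearMap.ker (gaugeMap E) = ℝ ∙ ((1 : X → ℝ), (0 : ℝ)) := by
  apply le_antisymm
  · rintro ⟨K, c⟩ hp
    have hK : ∀ x y, (x, y) ∈ E → K y = K x + c := fun x y h => by
      have hxy := congrFun (LinearMap.mem_ker.1 hp) ⟨(x, y), h⟩
      rw [gaugeMap_apply, Pi.zero_apply] at hxy
      linarith
    obtain ⟨x₀⟩ := ‹Nonempty X›
    have hc : c = 0 := by
      obtain ⟨k, hk, hkc⟩ := (hE x₀ x₀).exists_eq_add_mul hK
      simpa [hk.ne'] using hkc
    refine Submodule.mem_span_singleton.2 ⟨K x₀, Prod.ext (funext fun x => ?_) (by simp [hc])⟩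
    obtain ⟨k, -, hkx⟩ := (hE x₀ x).exists_eq_add_mul hK
    simp [hkx, hc]
  · rw [Submodule.span_singleton_le_iff_mem, LinearMap.mem_ker]
    ext
    simp [gaugeMap_apply]

variable [Fintype X]

namespace IsMarkovKernel

theorem pos (hw : IsMarkovKernel E w) {x y : X} (h : (x, y) ∈ E) : 0 < w x y :=
  (hw.2.2 x y).2 h

theorem eq_zero_of_notMem (hw : IsMarkovKernel E w) {x y : X} (h : (x, y) ∉ E) : w x y = 0 :=
  ((hw.1 x y).eq_or_lt.resolve_right fun hpos => h ((hw.2.2 x y).1 hpos)).symm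

/-- Maximum principle: the set where `g` attains its maximum is closed under edges. -/
theorem eq_of_le_sum_mul (hE : StronglyConnected E) (hw : IsMarkovKernel E w) {g : X → ℝ}
    (hg : ∀ x, g x ≤ ∑ y, w x y * g y) (x y : X) : g x = g y := by
  have : Nonempty X := ⟨x⟩
  obtain ⟨x₀, hx₀⟩ := Finite.exists_max g
  have hstep : ∀ a b, g a = g x₀ → (a, b) ∈ E → g b = g x₀ := by
    intro a b ha hab
    have hterm : ∀ y ∈ univ, 0 ≤ w a y * (g x₀ - g y) := fun y _ =>
      mul_nonneg (hw.1 a y) (sub_nonneg.2 (hx₀ y))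
    have hsum : ∑ y, w a y * (g x₀ - g y) = 0 := by
      refine le_antisymm ?_ (sum_nonneg hterm)
      simp only [mul_sub, sum_sub_distrib, ← sum_mul, hw.2.1 a, one_mul]
      linarith [hg a]
    have hb := (sum_eq_zero_iff_of_nonneg hterm).1 hsum b (mem_univ b)
    linarith [(mul_eq_zero.1 hb).resolve_left (hw.pos hab).ne']
  have hconst : ∀ z, g z = g x₀ := fun z => by
    induction hE x₀ z with
    | single h => exact hstep _ _ rfl h
    | tail _ h ih => exact hstep _ _ ih h
  rw [hconst x, hconst y]

end IsMarkovKernel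

theorem exists_isMarkovKernel_edgeLog_eq [DecidableEq X] [Nonempty X] (hE : StronglyConnected E)
    (H : E → ℝ) : ∃ w p, IsMarkovKernel E w ∧ edgeLog E w = H + gaugeMap E p := by
  set M : Matrix X X ℝ := Matrix.of fun x y => if h : (x, y) ∈ E then Real.exp (H ⟨_, h⟩) else 0
  have hM : ∀ x y, 0 ≤ M x y := fun x y => by
    simp only [M, Matrix.of_apply]; split_ifs <;> positivity
  have hME : ∀ x y (h : (x, y) ∈ E), M x y = Real.exp (H ⟨_, h⟩) := fun x y h => by simp [M, h]
  have hirr : M.IsIrreducible :=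
    hE.isIrreducible hM fun x y h => (hME x y h).symm ▸ Real.exp_pos _
  obtain ⟨r, hr, v, hv, hMv⟩ := hirr.exists_pos_eigenvector
  have hrow : ∀ x, ∑ y, M x y * v y = r * v x := fun x => congrFun hMv x
  refine ⟨fun x y => M x y * v y / (r * v x), (Real.log ∘ v, Real.log r), ⟨?_, ?_, ?_⟩, ?_⟩
  · exact fun x y => div_nonneg (mul_nonneg (hM x y) (hv y).le) (mul_pos hr (hv x)).le
  · intro x
    rw [← sum_div, hrow, div_self (mul_pos hr (hv x)).ne']
  · intro x y
    by_cases h : (x, y) ∈ E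
    · simp only [h, iff_true, hME x y h]
      exact div_pos (mul_pos (Real.exp_pos _) (hv y)) (mul_pos hr (hv x))
    · simp [M, h]
  · ext ⟨⟨x, y⟩, h⟩
    simp only [edgeLog, hME x y h, Pi.add_apply, gaugeMap_apply, Function.comp_apply]
    rw [Real.log_div (mul_pos (Real.exp_pos _) (hv y)).ne' (mul_pos hr (hv x)).ne',
      Real.log_mul (Real.exp_pos _).ne' (hv y).ne', Real.log_mul hr.ne' (hv x).ne', Real.log_exp]
    ring

theorem IsMarkovKernel.eq_of_edgeLog_sub_mem_range (hE : StronglyConnected E)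
    (hu : IsMarkovKernel E u) (hw : IsMarkovKernel E w)
    (h : edgeLog E w - edgeLog E u ∈ LinearMap.range (gaugeMap E)) : w = u := by
  obtain ⟨⟨K, c⟩, hKc⟩ := h
  have hwu : ∀ x y, w x y = u x y * Real.exp (K y - K x - c) := by
    intro x y
    by_cases hxy : (x, y) ∈ E
    · have hlog := congrFun hKc ⟨(x, y), hxy⟩
      simp only [gaugeMap_apply, edgeLog, Pi.sub_apply] at hlog
      rw [hlog, Real.exp_sub, Real.exp_log (hw.pos hxy), Real.exp_log (hu.pos hxy)]
      field_simp [(hu.pos hxy).ne']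
    · rw [hw.eq_zero_of_notMem hxy, hu.eq_zero_of_notMem hxy, zero_mul]
  have hrow : ∀ x, ∑ y, u x y * Real.exp (K y) = Real.exp c * Real.exp (K x) := by
    intro x
    have h1 := hw.2.1 x
    simp only [hwu, Real.exp_sub, mul_div_assoc', ← sum_div] at h1
    field_simp at h1
    linarith
  -- `exp ∘ K` is an eigenvector of `u` with eigenvalue `exp c`, so it is sub- or superharmonic.
  have hK : ∀ x y, K x = K y := by
    intro x y
    refine Real.exp_injective ?_
    rcases le_total 0 c with hc | hc
    · refine hu.eq_of_le_sum_mul hE (g := fun x => Real.exp (K x)) (fun x => ?_) x y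
      rw [hrow]
      exact le_mul_of_one_le_left (Real.exp_pos _).le (Real.one_le_exp hc)
    · refine neg_injective <|
        hu.eq_of_le_sum_mul hE (g := fun x => -Real.exp (K x)) (fun x => ?_) x y
      simp only [mul_neg, sum_neg_distrib, hrow, neg_le_neg_iff]
      exact mul_le_of_le_one_left (Real.exp_pos _).le (Real.exp_le_one_iff.2 hc)
  funext x y
  have hexp : ∀ y, Real.exp (K y - K x - c) = Real.exp (-c) := fun y => by rw [hK y x]; ring_nf
  have hc : Real.exp (-c) = 1 := by
    simpa only [hwu, hexp, ← sum_mul, hu.2.1 x, one_mul] using hw.2.1 x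
  rw [hwu, hexp, hc, mul_one]

theorem finrank_quotient_range_gaugeMap [Nonempty X] (hE : StronglyConnected E) :
    Module.finrank ℝ ((E → ℝ) ⧸ LinearMap.range (gaugeMap E)) = E.card - Fintype.card X := by
  have := LinearMap.finrank_range_add_finrank_ker (gaugeMap E)
  rw [ker_gaugeMap hE, finrank_span_singleton (by simp), Module.finrank_prod,
    Module.finrank_fintype_fun_eq_card, Module.finrank_self] at this
  rw [Submodule.finrank_quotient, Module.finrank_fintype_fun_eq_card, Fintype.card_coe]
  omega

end MarkovKernel

/-- Corollary 1. With `d = |E| − |X|`, there exist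
`C, F₁, …, F_d : X × X → ℝ`, `K : ℝ^d × X → ℝ` and `ψ : ℝ^d → ℝ` such that the
kernels `w_θ` defined by
`log w_θ(y|x) = C(x,y) + Σᵢ θⁱ Fᵢ(x,y) + K_θ(y) − K_θ(x) − ψ(θ)` on `E`
(and `w_θ(y|x) = 0` off `E`) realize `θ ↦ w_θ` as a bijection from `ℝ^d` onto
`W(X,E)`; i.e. `W(X,E)` is itself an exponential family of dimension `|E| − |X|`. -/
theorem markovKernels_is_exponential_family
    {X : Type*} [Fintype X] [DecidableEq X] (hX : 2 ≤ Fintype.card X)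
    (E : Finset (X × X)) (hconn : StronglyConnected E) :
    ∃ (C : X → X → ℝ) (F : Fin (E.card - Fintype.card X) → X → X → ℝ)
      (K : (Fin (E.card - Fintype.card X) → ℝ) → X → ℝ)
      (ψ : (Fin (E.card - Fintype.card X) → ℝ) → ℝ)
      (w : (Fin (E.card - Fintype.card X) → ℝ) → X → X → ℝ),
      (∀ θ x y, (x, y) ∈ E →
        Real.log (w θ x y) = C x y + ∑ i, θ i * F i x y + K θ y - K θ x - ψ θ) ∧
      (∀ θ x y, (x, y) ∉ E → w θ x y = 0) ∧
      Function.Injective w ∧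
      Set.range w = {v : X → X → ℝ | IsMarkovKernel E v} := by
  have : Nonempty X := Fintype.card_pos_iff.1 (by omega)
  set S := LinearMap.range (gaugeMap E)
  let e : (Fin (E.card - Fintype.card X) → ℝ) ≃ₗ[ℝ] (E → ℝ) ⧸ S :=
    .ofFinrankEq _ _ <| by rw [Module.finrank_fin_fun, finrank_quotient_range_gaugeMap hconn]
  obtain ⟨g, hg⟩ := S.mkQ.exists_rightInverse_of_surjective S.range_mkQ
  set φ := g ∘ₗ e.toLinearMap
  choose w p hw hlog using fun θ => exists_isMarkovKernel_edgeLog_eq hconn (φ θ)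
  have hclass : ∀ θ, Submodule.Quotient.mk (edgeLog E (w θ)) = e θ := fun θ => by
    rw [hlog, Submodule.Quotient.mk_add,
      (Submodule.Quotient.mk_eq_zero S).2 (LinearMap.mem_range_self _ _), add_zero]
    exact LinearMap.congr_fun hg (e θ)
  refine ⟨fun _ _ => 0,
    fun i x y => if h : (x, y) ∈ E then φ (fun j => if i = j then 1 else 0) ⟨(x, y), h⟩ else 0,
    fun θ => (p θ).1, fun θ => (p θ).2, w, fun θ x y h => ?_,
    fun θ x y => (hw θ).eq_zero_of_notMem, fun θ θ' h => e.injective ?_, ?_⟩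
  · have hxy := congrFun (hlog θ) ⟨(x, y), h⟩
    rw [φ.pi_apply_eq_sum_univ, Pi.add_apply, Finset.sum_apply] at hxy
    simp only [edgeLog, gaugeMap_apply, Pi.smul_apply, smul_eq_mul] at hxy
    simp only [hxy, dif_pos h, zero_add]
    ring
  · rw [← hclass, ← hclass, h]
  · ext v
    refine ⟨?_, fun hv => ⟨e.symm (Submodule.Quotient.mk (edgeLog E v)),
      hv.eq_of_edgeLog_sub_mem_range hconn (hw _) ((Submodule.Quotient.eq S).1 ?_)⟩⟩
    · rintro ⟨θ, rfl⟩
      exact hw θ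
    · rw [hclass, e.apply_symm_apply]
end

section
/- Let {w_θ : θ ∈ ℝ^d} ⊆ W(X,E) be an exponential family given by C, F_1, …, F_d, K, ψ, and assume K_θ(x) and ψ(θ) are twice continuously differentiable in θ and that θ ↦ p_θ is continuously differentiable, where p_θ is the stationary distribution of w_θ. Define η_j(θ) = Σ_{(x,y)∈E} p_θ(x) w_θ(y|x) F_j(x,y) and g_ij(θ) = Σ_{(x,y)∈E} p_θ(x) w_θ(y|x) (∂_i log w_θ(y|x))(∂_j log w_θ(y|x)). Then ∂_i η_j(θ) = g_ij(θ) for all i, j and all θ ∈ ℝ^d. -/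
open scoped BigOperators

/-- `M ⊆ W(X,E)` is a `d`-dimensional exponential family of Markov kernels:
there exist `C, F₁, …, F_d : X × X → ℝ`, `K : ℝ^d × X → ℝ` and `ψ : ℝ^d → ℝ`
such that, with `w_θ` defined by
`log w_θ(y|x) = C(x,y) + Σᵢ θⁱ Fᵢ(x,y) + K_θ(y) − K_θ(x) − ψ(θ)` on `E`
and `w_θ(y|x) = 0` off `E`, each `w_θ` lies in `W(X,E)` and `M = {w_θ : θ ∈ ℝ^d}`. -/
def IsExpFamily {X : Type*} [Fintype X] (E : Finset (X × X)) (d : ℕ)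
    (M : Set (X → X → ℝ)) : Prop :=
  ∃ (C : X → X → ℝ) (F : Fin d → X → X → ℝ) (K : (Fin d → ℝ) → X → ℝ)
    (ψ : (Fin d → ℝ) → ℝ) (w : (Fin d → ℝ) → X → X → ℝ),
    (∀ θ x y, (x, y) ∈ E →
      Real.log (w θ x y) = C x y + ∑ i, θ i * F i x y + K θ y - K θ x - ψ θ) ∧
    (∀ θ x y, (x, y) ∉ E → w θ x y = 0) ∧
    (∀ θ, IsMarkovKernel E (w θ)) ∧
    M = Set.range w

/-- `p` is the (positive) stationary distribution of the Markov kernel `w`. -/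
def IsMarkovStationary {X : Type*} [Fintype X] (w : X → X → ℝ) (p : X → ℝ) : Prop :=
  (∀ x, 0 < p x) ∧ (∑ x, p x = 1) ∧ (∀ y, ∑ x, p x * w x y = p y)

/-- The partial derivative `∂f/∂θⁱ` of a function `f : ℝ^d → ℝ` at `θ`. -/
noncomputable def pd {d : ℕ} (f : (Fin d → ℝ) → ℝ) (i : Fin d) (θ : Fin d → ℝ) : ℝ :=
  fderiv ℝ f θ (Pi.single i 1)

/-! Write `P_θ(x, y) = p_θ(x) w_θ(y|x)` for the edge distribution, so that
`∂_i η_j = Σ ∂_i P · F_j`. On `E` the exponential form gives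
`F_j = ∂_j log w − (∂_j K(y) − ∂_j K(x)) + ∂_j ψ`, and differentiating the identities
`Σ P = 1` and `Σ P · (h(y) − h(x)) = 0` (stationarity) shows that the coboundary and the
constant contribute nothing. What remains is
`Σ ∂_i P · ∂_j log w = Σ ∂_i p(x) ∂_j w(y|x) + Σ P · ∂_i log w · ∂_j log w`,
and the first sum vanishes because every row of `w_θ` sums to one. -/

open Finset

section Calculus

variable {V : Type*} [NormedAddCommGroup V] [NormedSpace ℝ V] {θ : V}

theorem sum_fderiv_apply_eq_zero_of_sum_eq_const {ι : Type*} {s : Finset ι} {f : ι → V → ℝ}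
    {c : ℝ} (hf : ∀ i ∈ s, DifferentiableAt ℝ (f i) θ) (hc : ∀ θ', ∑ i ∈ s, f i θ' = c)
    (v : V) : ∑ i ∈ s, fderiv ℝ (f i) θ v = 0 := by
  rw [← _root_.sum_apply, ← fderiv_fun_sum hf, funext hc, fderiv_const_apply, zero_apply]

theorem fderiv_eq_smul_fderiv_log {f : V → ℝ} (hf : DifferentiableAt ℝ f θ) (h0 : f θ ≠ 0) :
    fderiv ℝ f θ = f θ • fderiv ℝ (fun θ' => Real.log (f θ')) θ := by
  rw [(hf.hasFDerivAt.log h0).fderiv, smul_smul, mul_inv_cancel₀ h0, one_smul]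

end Calculus

section MarkovKernel

variable {X : Type*} [Fintype X] {E : Finset (X × X)} {w : X → X → ℝ}

theorem IsMarkovKernel.eq_zero_of_notMem_s14 (hw : IsMarkovKernel E w) {x y : X}
    (h : (x, y) ∉ E) : w x y = 0 :=
  le_antisymm (not_lt.mp (mt (hw.2.2 x y).mp h)) (hw.1 x y)

theorem IsMarkovKernel.sum_edges_mul_eq_sum_sum (hw : IsMarkovKernel E w) (g : X → X → ℝ) :
    ∑ e ∈ E, w e.1 e.2 * g e.1 e.2 = ∑ x, ∑ y, w x y * g x y := by
  rw [← Fintype.sum_prod_type' (fun x y => w x y * g x y)]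
  exact sum_subset (subset_univ E) fun e _ he => by rw [hw.eq_zero_of_notMem_s14 he, zero_mul]

theorem IsMarkovKernel.sum_edges_fst_mul_eq_sum (hw : IsMarkovKernel E w) (g : X → ℝ) :
    ∑ e ∈ E, g e.1 * w e.1 e.2 = ∑ x, g x := by
  simp_rw [mul_comm (g _), hw.sum_edges_mul_eq_sum_sum fun x _ => g x, ← sum_mul, hw.2.1, one_mul]

theorem IsMarkovStationary.sum_edges_mul_sub_eq_zero {p : X → ℝ} (hp : IsMarkovStationary w p)
    (hw : IsMarkovKernel E w) (h : X → ℝ) :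
    ∑ e ∈ E, p e.1 * w e.1 e.2 * (h e.2 - h e.1) = 0 := by
  have hinflow : ∑ e ∈ E, p e.1 * w e.1 e.2 * h e.2 = ∑ y, p y * h y := calc
    _ = ∑ x, ∑ y, w x y * (p x * h y) := by
      rw [← hw.sum_edges_mul_eq_sum_sum]; exact sum_congr rfl fun _ _ => by ring
    _ = ∑ y, (∑ x, p x * w x y) * h y := by
      rw [sum_comm]
      exact sum_congr rfl fun _ _ => by rw [sum_mul]; exact sum_congr rfl fun _ _ => by ring
    _ = ∑ y, p y * h y := by simp_rw [hp.2.2]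
  have houtflow : ∑ e ∈ E, p e.1 * w e.1 e.2 * h e.1 = ∑ x, p x * h x := by
    rw [← hw.sum_edges_fst_mul_eq_sum]; exact sum_congr rfl fun _ _ => by ring
  simp_rw [mul_sub, sum_sub_distrib, hinflow, houtflow, sub_self]

end MarkovKernel

section KernelFamily

variable {V X : Type*} [NormedAddCommGroup V] [NormedSpace ℝ V] [Fintype X]
  {E : Finset (X × X)} {w : V → X → X → ℝ} {p : V → X → ℝ} {θ : V}

theorem fderiv_kernel_eq_zero_of_notMem (hw : ∀ θ, IsMarkovKernel E (w θ)) {x y : X}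
    (h : (x, y) ∉ E) : fderiv ℝ (fun θ => w θ x y) θ = 0 := by
  simp_rw [(hw _).eq_zero_of_notMem_s14 h, fderiv_const_apply]

theorem fderiv_kernel_eq_smul_fderiv_log (hw : ∀ θ, IsMarkovKernel E (w θ)) {x y : X}
    (hwd : DifferentiableAt ℝ (fun θ => w θ x y) θ) :
    fderiv ℝ (fun θ => w θ x y) θ = w θ x y • fderiv ℝ (fun θ => Real.log (w θ x y)) θ := by
  by_cases hxy : (x, y) ∈ E
  · exact fderiv_eq_smul_fderiv_log hwd (((hw θ).2.2 x y).mpr hxy).ne'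
  · rw [fderiv_kernel_eq_zero_of_notMem hw hxy, (hw θ).eq_zero_of_notMem_s14 hxy, zero_smul]

theorem sum_fderiv_edge_mul_coboundary_add_const_eq_zero (hw : ∀ θ, IsMarkovKernel E (w θ))
    (hp : ∀ θ, IsMarkovStationary (w θ) (p θ))
    (hwd : ∀ x y, DifferentiableAt ℝ (fun θ => w θ x y) θ)
    (hpd : ∀ x, DifferentiableAt ℝ (fun θ => p θ x) θ) (h : X → ℝ) (c : ℝ) (v : V) :
    ∑ e ∈ E, fderiv ℝ (fun θ => p θ e.1 * w θ e.1 e.2) θ v * (h e.2 - h e.1 + c) = 0 := by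
  have hmass (θ : V) : ∑ e ∈ E, p θ e.1 * w θ e.1 e.2 = 1 := by
    rw [(hw θ).sum_edges_fst_mul_eq_sum, (hp θ).2.1]
  have hconst (θ : V) : ∑ e ∈ E, p θ e.1 * w θ e.1 e.2 * (h e.2 - h e.1 + c) = c := by
    simp_rw [mul_add, sum_add_distrib, (hp θ).sum_edges_mul_sub_eq_zero (hw θ), ← sum_mul, hmass,
      zero_add, one_mul]
  have hmass_d (e : X × X) : DifferentiableAt ℝ (fun θ => p θ e.1 * w θ e.1 e.2) θ :=
    (hpd e.1).mul (hwd e.1 e.2)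
  rw [← sum_fderiv_apply_eq_zero_of_sum_eq_const (fun e _ => (hmass_d e).mul_const _) hconst v]
  refine sum_congr rfl fun e _ => ?_
  rw [fderiv_mul_const (hmass_d e), smul_apply, smul_eq_mul, mul_comm]

theorem sum_mul_fderiv_kernel_eq_zero (hw : ∀ θ, IsMarkovKernel E (w θ))
    (hwd : ∀ x y, DifferentiableAt ℝ (fun θ => w θ x y) θ) (a : X → ℝ) (v : V) :
    ∑ e ∈ E, a e.1 * fderiv ℝ (fun θ => w θ e.1 e.2) θ v = 0 := calc
  _ = ∑ x, a x * ∑ y, fderiv ℝ (fun θ => w θ x y) θ v := by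
    rw [sum_subset (subset_univ E) fun e _ he => by
      rw [fderiv_kernel_eq_zero_of_notMem hw he, zero_apply, mul_zero]]
    simp_rw [Fintype.sum_prod_type, mul_sum]
  _ = 0 := by
    simp [sum_fderiv_apply_eq_zero_of_sum_eq_const (fun y _ => hwd _ y) (fun θ => (hw θ).2.1 _)]

theorem fderiv_sum_edges_eq_fisher (hw : ∀ θ, IsMarkovKernel E (w θ))
    (hp : ∀ θ, IsMarkovStationary (w θ) (p θ))
    (hwd : ∀ x y, DifferentiableAt ℝ (fun θ => w θ x y) θ)
    (hpd : ∀ x, DifferentiableAt ℝ (fun θ => p θ x) θ) (f : X → X → ℝ) (h : X → ℝ) (c : ℝ)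
    (v v' : V) (hf : ∀ e ∈ E,
      fderiv ℝ (fun θ => Real.log (w θ e.1 e.2)) θ v' = f e.1 e.2 + h e.2 - h e.1 - c) :
    fderiv ℝ (fun θ => ∑ e ∈ E, p θ e.1 * w θ e.1 e.2 * f e.1 e.2) θ v
      = ∑ e ∈ E, p θ e.1 * w θ e.1 e.2 * fderiv ℝ (fun θ => Real.log (w θ e.1 e.2)) θ v *
          fderiv ℝ (fun θ => Real.log (w θ e.1 e.2)) θ v' := by
  set score : X × X → V →L[ℝ] ℝ := fun e => fderiv ℝ (fun θ => Real.log (w θ e.1 e.2)) θ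
  set dmass : X × X → ℝ := fun e => fderiv ℝ (fun θ => p θ e.1 * w θ e.1 e.2) θ v
  have hmass_d (e : X × X) : DifferentiableAt ℝ (fun θ => p θ e.1 * w θ e.1 e.2) θ :=
    (hpd e.1).mul (hwd e.1 e.2)
  have hdw (e : X × X) : fderiv ℝ (fun θ => w θ e.1 e.2) θ = w θ e.1 e.2 • score e :=
    fderiv_kernel_eq_smul_fderiv_log hw (hwd e.1 e.2)
  have hdmass (e : X × X) :
      dmass e = fderiv ℝ (fun θ => p θ e.1) θ v * w θ e.1 e.2
        + p θ e.1 * w θ e.1 e.2 * score e v := by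
    simp only [dmass, fderiv_fun_mul (hpd e.1) (hwd e.1 e.2), hdw, add_apply, smul_apply,
      smul_eq_mul]
    ring
  calc _ = ∑ e ∈ E, dmass e * f e.1 e.2 := by
        rw [fderiv_fun_sum fun e _ => (hmass_d e).mul_const _, _root_.sum_apply]
        exact sum_congr rfl fun e _ => by
          rw [fderiv_mul_const (hmass_d e), smul_apply, smul_eq_mul, mul_comm]
    _ = ∑ e ∈ E, dmass e * score e v' - ∑ e ∈ E, dmass e * (h e.2 - h e.1 + -c) := by
        rw [← sum_sub_distrib]
        exact sum_congr rfl fun e he => by rw [show score e v' = _ from hf e he]; ring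
    _ = ∑ e ∈ E, dmass e * score e v' := by
        rw [sum_fderiv_edge_mul_coboundary_add_const_eq_zero hw hp hwd hpd, sub_zero]
    _ = ∑ e ∈ E, fderiv ℝ (fun θ => p θ e.1) θ v * fderiv ℝ (fun θ => w θ e.1 e.2) θ v'
          + ∑ e ∈ E, p θ e.1 * w θ e.1 e.2 * score e v * score e v' := by
        rw [← sum_add_distrib]
        exact sum_congr rfl fun e _ => by rw [hdmass, hdw, smul_apply, smul_eq_mul]; ring
    _ = ∑ e ∈ E, p θ e.1 * w θ e.1 e.2 * score e v * score e v' := by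
        rw [sum_mul_fderiv_kernel_eq_zero hw hwd (fun x => fderiv ℝ (fun θ => p θ x) θ v),
          zero_add]

end KernelFamily

section ExpFamily

variable {X : Type*} {d : ℕ} {C : X → X → ℝ}
  {F : Fin d → X → X → ℝ} {K : (Fin d → ℝ) → X → ℝ} {ψ : (Fin d → ℝ) → ℝ}
  {w : (Fin d → ℝ) → X → X → ℝ}

theorem pd_sum_mul (a : Fin d → ℝ) (j : Fin d) (θ : Fin d → ℝ) :
    pd (fun θ' => ∑ k, θ' k * a k) j θ = a j := by
  rw [pd, (HasFDerivAt.fun_sum fun k _ => (hasFDerivAt_apply k θ).mul_const (a k)).fderiv]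
  simp [Pi.single_apply]

theorem differentiableAt_expFamily_kernel [Fintype X] {E : Finset (X × X)}
    (hker : ∀ θ, IsMarkovKernel E (w θ))
    (hlog : ∀ θ x y, (x, y) ∈ E →
      Real.log (w θ x y) = C x y + ∑ i, θ i * F i x y + K θ y - K θ x - ψ θ)
    (hK : ∀ x, Differentiable ℝ (fun θ => K θ x)) (hψ : Differentiable ℝ ψ)
    (θ : Fin d → ℝ) (x y : X) : DifferentiableAt ℝ (fun θ => w θ x y) θ := by
  by_cases hxy : (x, y) ∈ E
  · have hexp : (fun θ => w θ x y)
        = fun θ => Real.exp (C x y + ∑ i, θ i * F i x y + K θ y - K θ x - ψ θ) :=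
      funext fun θ => by rw [← hlog θ x y hxy, Real.exp_log (((hker θ).2.2 x y).mpr hxy)]
    rw [hexp]
    have hKx := hK x
    have hKy := hK y
    fun_prop
  · simp_rw [(hker _).eq_zero_of_notMem_s14 hxy]
    exact differentiableAt_const 0

theorem pd_log_expFamily_kernel {x y : X}
    (hlog : ∀ θ, Real.log (w θ x y) = C x y + ∑ i, θ i * F i x y + K θ y - K θ x - ψ θ)
    (hK : ∀ x, Differentiable ℝ (fun θ => K θ x)) (hψ : Differentiable ℝ ψ)
    (j : Fin d) (θ : Fin d → ℝ) :
    pd (fun θ => Real.log (w θ x y)) j θ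
      = F j x y + pd (fun θ => K θ y) j θ - pd (fun θ => K θ x) j θ - pd ψ j θ := by
  rw [funext hlog, ← pd_sum_mul (F · x y) j θ]
  unfold pd
  rw [fderiv_fun_sub (by fun_prop) (hψ θ), fderiv_fun_sub (by fun_prop) (hK x θ),
    fderiv_fun_add (by fun_prop) (hK y θ), fderiv_const_add]
  simp only [sub_apply, add_apply]

end ExpFamily

theorem grad_expectation_parameter_eq_fisher_general
    {X : Type*} [Fintype X] {d : ℕ}
    (E : Finset (X × X))
    (C : X → X → ℝ) (F : Fin d → X → X → ℝ) (K : (Fin d → ℝ) → X → ℝ)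
    (ψ : (Fin d → ℝ) → ℝ) (w : (Fin d → ℝ) → X → X → ℝ)
    (hlog : ∀ θ x y, (x, y) ∈ E →
      Real.log (w θ x y) = C x y + ∑ i, θ i * F i x y + K θ y - K θ x - ψ θ)
    (hker : ∀ θ, IsMarkovKernel E (w θ))
    (hK : ∀ x, ContDiff ℝ 2 (fun θ => K θ x)) (hψ : ContDiff ℝ 2 ψ)
    (p : (Fin d → ℝ) → X → ℝ) (hp : ∀ θ, IsMarkovStationary (w θ) (p θ))
    (hpC : ∀ x, ContDiff ℝ 1 (fun θ => p θ x))
    (i j : Fin d) (θ : Fin d → ℝ) :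
    pd (fun θ' => ∑ e ∈ E, p θ' e.1 * w θ' e.1 e.2 * F j e.1 e.2) i θ
      = ∑ e ∈ E, p θ e.1 * w θ e.1 e.2 *
          pd (fun θ' => Real.log (w θ' e.1 e.2)) i θ *
          pd (fun θ' => Real.log (w θ' e.1 e.2)) j θ := by
  have hKd : ∀ x, Differentiable ℝ (fun θ => K θ x) := fun x => (hK x).differentiable two_ne_zero
  have hψd : Differentiable ℝ ψ := hψ.differentiable two_ne_zero
  exact fderiv_sum_edges_eq_fisher hker hp
    (differentiableAt_expFamily_kernel hker hlog hKd hψd θ)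
    (fun x => (hpC x).differentiable one_ne_zero θ) (F j) (fun x => pd (fun θ => K θ x) j θ)
    (pd ψ j θ) _ _ fun e he => pd_log_expFamily_kernel (hlog · e.1 e.2 he) hKd hψd j θ

/-- For an exponential family `{w_θ : θ ∈ ℝ^d} ⊆ W(X,E)` given by
`C, F₁, …, F_d, K, ψ` (with `K`, `ψ` twice continuously differentiable in `θ` and
the stationary distribution `p_θ` continuously differentiable in `θ`), the Jacobian
of the expectation parameters equals the Fisher information matrix:
`∂_i η_j(θ) = g_ij(θ)`. -/
theorem grad_expectation_parameter_eq_fisher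
    {X : Type*} [Fintype X] [DecidableEq X] {d : ℕ}
    (hX : 2 ≤ Fintype.card X)
    (E : Finset (X × X)) (hconn : StronglyConnected E)
    (C : X → X → ℝ) (F : Fin d → X → X → ℝ) (K : (Fin d → ℝ) → X → ℝ)
    (ψ : (Fin d → ℝ) → ℝ) (w : (Fin d → ℝ) → X → X → ℝ)
    (hlog : ∀ θ x y, (x, y) ∈ E →
      Real.log (w θ x y) = C x y + ∑ i, θ i * F i x y + K θ y - K θ x - ψ θ)
    (hzero : ∀ θ x y, (x, y) ∉ E → w θ x y = 0)
    (hker : ∀ θ, IsMarkovKernel E (w θ))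
    (hK : ∀ x, ContDiff ℝ 2 (fun θ => K θ x)) (hψ : ContDiff ℝ 2 ψ)
    (p : (Fin d → ℝ) → X → ℝ) (hp : ∀ θ, IsMarkovStationary (w θ) (p θ))
    (hpC : ∀ x, ContDiff ℝ 1 (fun θ => p θ x))
    (i j : Fin d) (θ : Fin d → ℝ) :
    pd (fun θ' => ∑ e ∈ E, p θ' e.1 * w θ' e.1 e.2 * F j e.1 e.2) i θ
      = ∑ e ∈ E, p θ e.1 * w θ e.1 e.2 *
          pd (fun θ' => Real.log (w θ' e.1 e.2)) i θ *
          pd (fun θ' => Real.log (w θ' e.1 e.2)) j θ :=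
  grad_expectation_parameter_eq_fisher_general E C F K ψ w hlog hker hK hψ p hp hpC i j θ
end
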